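/- In BiSample-MD, for a population of n users where each user i with ε_u^i ≥ ε holds v_i ∈ [−1,1] and otherwise holds ⊥, the expected conditional frequencies satisfy: f_POS + f_NEG = (2p−1)·(1 − f_⊥) + 2(1−p) in expectation, where f_⊥ is the fraction of ⊥ users and p = e^ε/(e^ε+1). Consequently f_⊥* = (1 − f_POS − f_NEG)/(2p−1) is an unbiased estimator of f_⊥. -/

import Mathlib

open Real Finset

/-- Expected probability of reporting `b = 1` given direction `s` for a user
holding `t ∈ [−1,1] ∪ {⊥}` under BiSample-MD. -/
noncomputable def gMD (ε : ℝ) (s : Bool) (t : Option ℝ) : ℝ :=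
  match t with
  | some v => if s then (exp ε - 1) / (exp ε + 1) * (v / 2) + 1 / 2
              else (1 - exp ε) / (1 + exp ε) * (v / 2) + 1 / 2
  | none => 1 / (exp ε + 1)

/-! The value terms of the two directions cancel, so `P[b=1|s=1] + P[b=1|s=0]` is `1` for every
real-valued user and `2(1-p)` for every `⊥` user. Summing, `f_POS + f_NEG = 1 - (2p-1) f_⊥`, which
is the claimed identity rearranged, and it can be solved for `f_⊥` because `2p - 1 > 0` when
`ε > 0`. -/

lemma two_mul_exp_div_exp_add_one_sub_one (ε : ℝ) :
    2 * (exp ε / (exp ε + 1)) - 1 = (exp ε - 1) / (exp ε + 1) := by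
  field_simp
  ring

lemma two_mul_exp_div_exp_add_one_sub_one_pos {ε : ℝ} (hε : 0 < ε) :
    0 < 2 * (exp ε / (exp ε + 1)) - 1 := by
  rw [two_mul_exp_div_exp_add_one_sub_one]
  exact div_pos (by linarith [one_lt_exp_iff.mpr hε]) (by positivity)

lemma gMD_true_add_gMD_false (ε : ℝ) (t : Option ℝ) :
    gMD ε true t + gMD ε false t =
      1 - (2 * (exp ε / (exp ε + 1)) - 1) * if t = none then 1 else 0 := by
  rw [two_mul_exp_div_exp_add_one_sub_one]
  cases t with
  | none =>
    simp only [gMD, if_true]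
    field_simp
    ring
  | some v =>
    simp only [gMD, if_true, Bool.false_eq_true, if_false, reduceCtorEq]
    rw [add_comm 1 (exp ε)]
    field_simp
    ring

lemma sum_gMD_true_add_gMD_false {ι : Type*} (ε : ℝ) (s : Finset ι) (hold : ι → Option ℝ) :
    ∑ i ∈ s, (gMD ε true (hold i) + gMD ε false (hold i)) =
      #s - (2 * (exp ε / (exp ε + 1)) - 1) * #{i ∈ s | hold i = none} := by
  simp only [gMD_true_add_gMD_false, sum_sub_distrib, ← mul_sum, sum_boole, sum_const,
    nsmul_eq_mul, mul_one]

theorem biSampleMD_missing_rate_unbiased_general (ε : ℝ) (hε : 0 < ε)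
    (n : ℕ) (hn : 0 < n) (hold : Fin n → Option ℝ)
    (p fPOS fNEG fBot : ℝ)
    (hp : p = exp ε / (exp ε + 1))
    (hPOS : fPOS = (∑ i, gMD ε true (hold i)) / n)
    (hNEG : fNEG = (∑ i, gMD ε false (hold i)) / n)
    (hBot : fBot = ((univ.filter fun i => hold i = none).card : ℝ) / n) :
    fPOS + fNEG = (2 * p - 1) * (1 - fBot) + 2 * (1 - p) ∧
    (1 - fPOS - fNEG) / (2 * p - 1) = fBot := by
  have hn' : (n : ℝ) ≠ 0 := by positivity
  have hsum : fPOS + fNEG = 1 - (2 * p - 1) * fBot := by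
    rw [hPOS, hNEG, hBot, hp, ← add_div, ← sum_add_distrib, sum_gMD_true_add_gMD_false,
      card_univ, Fintype.card_fin]
    field_simp
  have hp' : 2 * p - 1 ≠ 0 := hp ▸ (two_mul_exp_div_exp_add_one_sub_one_pos hε).ne'
  refine ⟨by rw [hsum]; ring, ?_⟩
  rw [show 1 - fPOS - fNEG = (2 * p - 1) * fBot by linarith]
  exact mul_div_cancel_left₀ fBot hp'

/-- For BiSample-MD with `p = e^ε/(e^ε+1)`, the expected conditional
frequencies satisfy `f_POS + f_NEG = (2p−1)(1−f_⊥) + 2(1−p)`, so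
`f_⊥* = (1 − f_POS − f_NEG)/(2p−1)` is an unbiased estimator of `f_⊥`. -/
theorem biSampleMD_missing_rate_unbiased (ε : ℝ) (hε : 0 < ε)
    (n : ℕ) (hn : 0 < n) (hold : Fin n → Option ℝ)
    (hval : ∀ i, ∀ v ∈ hold i, v ∈ Set.Icc (-1 : ℝ) 1)
    (p fPOS fNEG fBot : ℝ)
    (hp : p = exp ε / (exp ε + 1))
    (hPOS : fPOS = (∑ i, gMD ε true (hold i)) / n)
    (hNEG : fNEG = (∑ i, gMD ε false (hold i)) / n)
    (hBot : fBot = ((univ.filter fun i => hold i = none).card : ℝ) / n) :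
    fPOS + fNEG = (2 * p - 1) * (1 - fBot) + 2 * (1 - p) ∧
    (1 - fPOS - fNEG) / (2 * p - 1) = fBot :=
  biSampleMD_missing_rate_unbiased_general ε hε n hn hold p fPOS fNEG fBot hp hPOS hNEG hBot
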